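/- arXiv:1604.07849 — 2 statements merged into one kernel-verified Lean document; each statement's English description precedes it below -/
import Mathlib

section
/- Let Q(e) be a continuous symmetric-matrix-valued function that is positive definite on the compact set 𝒬 = {e : ‖e‖² ≤ ρ}, with minimum eigenvalue over 𝒬 equal to λ_min > 0, and let f be locally Lipschitz on 𝒬 with f(0) = 0, with Lipschitz constant q. Then for every c > q/λ_min, every solution of ė = −2c Q(e) e + 2f(e) with e(0) ∈ 𝒬 remains in 𝒬 for all t ≥ 0 and converges to 0 exponentially. -/
open scoped RealInnerProductSpace

open Set

/-- Core of Theorem 2: if `Q(e)` is symmetric, continuous and uniformly positive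
definite (constant `λ_min`) on the compact set `𝒬 = {e : ‖e‖² ≤ ρ}`, and `f`
satisfies `‖f(e)‖ ≤ q‖e‖` on `𝒬` with `f(0) = 0`, then for every `c > q/λ_min`,
any solution of `ė = −2c Q(e) e + 2 f(e)` starting in `𝒬` stays in `𝒬` and
converges to `0` exponentially. -/
theorem formation_motion_exponential_stability {n : ℕ}
    (ρ lam q c : ℝ) (hρ : 0 < ρ) (hlam : 0 < lam) (hq : 0 ≤ q) (hc : q / lam < c)
    (Q : EuclideanSpace ℝ (Fin n) →
      (EuclideanSpace ℝ (Fin n) →L[ℝ] EuclideanSpace ℝ (Fin n)))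
    (hQcont : Continuous Q)
    (hQsym : ∀ e x y, ⟪Q e x, y⟫ = ⟪x, Q e y⟫)
    (hQpd : ∀ e, ‖e‖ ^ 2 ≤ ρ → ∀ x, lam * ‖x‖ ^ 2 ≤ ⟪x, Q e x⟫)
    (f : EuclideanSpace ℝ (Fin n) → EuclideanSpace ℝ (Fin n))
    (hf : ∀ e, ‖e‖ ^ 2 ≤ ρ → ‖f e‖ ≤ q * ‖e‖) (hf0 : f 0 = 0)
    (e : ℝ → EuclideanSpace ℝ (Fin n))
    (hde : ∀ t, 0 ≤ t → HasDerivAt e (-(2 * c) • Q (e t) (e t) + (2 : ℝ) • f (e t)) t)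
    (h0 : ‖e 0‖ ^ 2 ≤ ρ) :
    (∀ t, 0 ≤ t → ‖e t‖ ^ 2 ≤ ρ) ∧
    (∀ t, 0 ≤ t → ‖e t‖ ^ 2 ≤ ‖e 0‖ ^ 2 * Real.exp (2 * (-c * lam + q) * t)) := by
  have hqlam : q < c * lam := by
    have := (div_lt_iff₀ hlam).mp hc
    linarith
  have hc0 : 0 < c := lt_of_le_of_lt (div_nonneg hq hlam.le) hc
  set A : ℝ := 2 * (q - c * lam) with hA
  have hAneg : A < 0 := by simp [hA]; nlinarith
  set D : ℝ → EuclideanSpace ℝ (Fin n) :=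
    fun t => -(2 * c) • Q (e t) (e t) + (2 : ℝ) • f (e t) with hD
  set V : ℝ → ℝ := fun t => ‖e t‖ ^ 2 with hV
  -- derivative of V
  have hVd : ∀ t, 0 ≤ t → HasDerivAt V (2 * ⟪e t, D t⟫) t := by
    intro t ht
    have h1 : HasDerivAt (fun s => ⟪e s, e s⟫) (⟪e t, D t⟫ + ⟪D t, e t⟫) t :=
      (hde t ht).inner ℝ (hde t ht)
    have hVeq : (fun s => ⟪e s, e s⟫) = V := by
      funext s
      rw [real_inner_self_eq_norm_sq]
    rw [hVeq] at h1
    have : ⟪e t, D t⟫ + ⟪D t, e t⟫ = 2 * ⟪e t, D t⟫ := by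
      rw [real_inner_comm (D t)]; ring
    rwa [this] at h1
  -- key differential inequality inside 𝒬
  have hkey : ∀ t, 0 ≤ t → V t ≤ ρ → 2 * ⟪e t, D t⟫ ≤ 2 * A * V t := by
    intro t ht htρ
    have hQ : lam * ‖e t‖ ^ 2 ≤ ⟪e t, Q (e t) (e t)⟫ := hQpd (e t) htρ (e t)
    have hfb : ‖f (e t)‖ ≤ q * ‖e t‖ := hf (e t) htρ
    have hinner : ⟪e t, f (e t)⟫ ≤ q * ‖e t‖ ^ 2 := by
      calc ⟪e t, f (e t)⟫ ≤ ‖e t‖ * ‖f (e t)‖ := real_inner_le_norm _ _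
        _ ≤ ‖e t‖ * (q * ‖e t‖) :=
          mul_le_mul_of_nonneg_left hfb (norm_nonneg _)
        _ = q * ‖e t‖ ^ 2 := by ring
    have hexp : ⟪e t, D t⟫ =
        -(2 * c) * ⟪e t, Q (e t) (e t)⟫ + 2 * ⟪e t, f (e t)⟫ := by
      simp only [hD]
      rw [inner_add_right, real_inner_smul_right, real_inner_smul_right]
    rw [hexp]
    have h1 : -(2 * c) * ⟪e t, Q (e t) (e t)⟫ ≤ -(2 * c) * (lam * ‖e t‖ ^ 2) := by
      apply mul_le_mul_of_nonpos_left hQ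
      nlinarith
    have hVnn : (0:ℝ) ≤ V t := by positivity
    simp only [hV] at hVnn ⊢
    nlinarith
  -- Step 1: invariance of 𝒬
  have hstay : ∀ t, 0 ≤ t → V t ≤ ρ := by
    intro T hT
    rcases eq_or_lt_of_le hT with rfl | hT'
    · exact h0
    have := image_le_of_deriv_right_lt_deriv_boundary
      (f := V) (f' := fun x => 2 * ⟪e x, D x⟫) (a := 0) (b := T)
      (B := fun _ => ρ) (B' := fun _ => 0)
      (fun x hx => (hVd x hx.1).continuousAt.continuousWithinAt)
      (fun x hx => (hVd x hx.1).hasDerivWithinAt)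
      h0 (fun x => hasDerivAt_const x ρ)
      ?_ (right_mem_Icc.mpr hT)
    · exact this
    · intro x hx hxρ
      have hb := hkey x hx.1 (le_of_eq hxρ)
      have hVx : V x = ρ := hxρ
      calc 2 * ⟪e x, D x⟫ ≤ 2 * A * V x := hb
        _ = 2 * A * ρ := by rw [hVx]
        _ < 0 := by nlinarith
  refine ⟨hstay, ?_⟩
  -- Step 2: exponential decay via monotone Lyapunov function
  set W : ℝ → ℝ := fun t => V t * Real.exp (-A * t) with hW
  have hWd : ∀ t, 0 ≤ t →
      HasDerivAt W (2 * ⟪e t, D t⟫ * Real.exp (-A * t)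
        + V t * (Real.exp (-A * t) * -A)) t := by
    intro t ht
    have hE : HasDerivAt (fun s => Real.exp (-A * s)) (Real.exp (-A * t) * -A) t := by
      simpa using ((hasDerivAt_id t).const_mul (-A)).exp
    exact (hVd t ht).mul hE
  have hanti : AntitoneOn W (Ici (0:ℝ)) := by
    apply antitoneOn_of_deriv_nonpos (convex_Ici 0)
    · intro x hx
      exact (hWd x hx).continuousAt.continuousWithinAt
    · intro x hx
      rw [interior_Ici] at hx
      exact (hWd x (le_of_lt hx)).differentiableAt.differentiableWithinAt
    · intro x hx
      rw [interior_Ici] at hx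
      rw [(hWd x hx.le).deriv]
      have hb := hkey x hx.le (hstay x hx.le)
      have hVnn : (0:ℝ) ≤ V x := by positivity
      have hexp : (0:ℝ) < Real.exp (-A * x) := Real.exp_pos _
      nlinarith [mul_le_mul_of_nonneg_right hb hexp.le, mul_nonneg hVnn hexp.le]
  intro t ht
  have hWle : W t ≤ W 0 := hanti (self_mem_Ici) ht ht
  have hW0 : W 0 = V 0 := by simp [hW]
  have hexp : (0:ℝ) < Real.exp (-A * t) := Real.exp_pos _
  have h2 : V t ≤ V 0 * Real.exp (A * t) := by
    rw [← hW0]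
    have := mul_le_mul_of_nonneg_right hWle hexp.le
    calc V t = W t * Real.exp (A * t) := by
          simp only [hW]
          rw [mul_assoc, ← Real.exp_add]
          have h3 : -A * t + A * t = 0 := by ring
          rw [h3, Real.exp_zero, mul_one]
      _ ≤ W 0 * Real.exp (A * t) :=
          mul_le_mul_of_nonneg_right hWle (Real.exp_pos _).le
  have : 2 * (-c * lam + q) * t = A * t := by ring
  rw [this]
  exact h2
end

section
/- For the isosceles triangle with side lengths d_1 = d_2 and d_3, the rotational motion parameter vector [μ_ω; μ̃_ω] = w·α·(3d_3²/(2d_1²+d_3²), 2−3d_3²/(2d_1²+d_3²), 1, 2−3d_3²/(2d_1²+d_3²), 3d_3²/(2d_1²+d_3²), 1)^T satisfies the shape-preservation condition: the induced velocities keep all three edge norms constant, i.e., z_k^T ż_k = 0 for k = 1,2,3 when z is in the desired isosceles shape. -/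
open scoped RealInnerProductSpace

/-- For the isosceles triangle (`‖z₁‖ = ‖z₂‖ = d₁`, `‖z₃‖ = d₃`), the rotational
motion parameters of Proposition 2 preserve all edge norms: `⟪z_k, ż_k⟫ = 0`. -/
theorem isosceles_rotation_preserves_shape (d1 d3 w α : ℝ)
    (hd1 : 0 < d1) (hd3 : 0 < d3) (hdeg : d3 < 2 * d1) (hw : 0 < w) (hα : 0 < α)
    (z1 z2 z3 : EuclideanSpace ℝ (Fin 2))
    (hsum : z1 + z2 + z3 = 0)
    (hz1 : ‖z1‖ = d1) (hz2 : ‖z2‖ = d1) (hz3 : ‖z3‖ = d3)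
    (μ1 μ2 μ3 t1 t2 t3 : ℝ)
    (hμ1 : μ1 = w * α * (3 * d3 ^ 2 / (2 * d1 ^ 2 + d3 ^ 2)))
    (hμ2 : μ2 = w * α * (2 - 3 * d3 ^ 2 / (2 * d1 ^ 2 + d3 ^ 2)))
    (hμ3 : μ3 = w * α * 1)
    (ht1 : t1 = w * α * (2 - 3 * d3 ^ 2 / (2 * d1 ^ 2 + d3 ^ 2)))
    (ht2 : t2 = w * α * (3 * d3 ^ 2 / (2 * d1 ^ 2 + d3 ^ 2)))
    (ht3 : t3 = w * α * 1)
    (v1 v2 v3 dz1 dz2 dz3 : EuclideanSpace ℝ (Fin 2))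
    (hv1 : v1 = μ1 • z1 + t3 • z3)
    (hv2 : v2 = t1 • z1 + μ2 • z2)
    (hv3 : v3 = t2 • z2 + μ3 • z3)
    (hdz1 : dz1 = v1 - v2) (hdz2 : dz2 = v2 - v3) (hdz3 : dz3 = v3 - v1) :
    ⟪z1, dz1⟫ = 0 ∧ ⟪z2, dz2⟫ = 0 ∧ ⟪z3, dz3⟫ = 0 := by
  have hD : (2 * d1 ^ 2 + d3 ^ 2) ≠ 0 := by positivity
  have h3 : z3 = -(z1 + z2) := eq_neg_of_add_eq_zero_right hsum
  have h11 : ⟪z1, z1⟫ = d1 ^ 2 := by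
    rw [real_inner_self_eq_norm_sq, hz1]
  have h22 : ⟪z2, z2⟫ = d1 ^ 2 := by
    rw [real_inner_self_eq_norm_sq, hz2]
  have h33 : ⟪z3, z3⟫ = d3 ^ 2 := by
    rw [real_inner_self_eq_norm_sq, hz3]
  have h21 : ⟪z2, z1⟫ = (d3 ^ 2 - 2 * d1 ^ 2) / 2 := by
    have := h33
    rw [h3] at this
    simp only [inner_neg_neg, inner_add_add_self, h11, h22,
      real_inner_comm z2 z1] at this
    linarith
  have h12 : ⟪z1, z2⟫ = (d3 ^ 2 - 2 * d1 ^ 2) / 2 := by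
    rw [real_inner_comm]; exact h21
  have h13 : ⟪z1, z3⟫ = -(d3 ^ 2) / 2 := by
    rw [h3, inner_neg_right, inner_add_right, h11, h12]; ring
  have h23 : ⟪z2, z3⟫ = -(d3 ^ 2) / 2 := by
    rw [h3, inner_neg_right, inner_add_right, h22, h21]; ring
  have h31 : ⟪z3, z1⟫ = -(d3 ^ 2) / 2 := by rw [real_inner_comm]; exact h13
  have h32 : ⟪z3, z2⟫ = -(d3 ^ 2) / 2 := by rw [real_inner_comm]; exact h23
  subst hdz1 hdz2 hdz3 hv1 hv2 hv3 hμ1 hμ2 hμ3 ht1 ht2 ht3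
  simp only [inner_sub_right, inner_add_right, real_inner_smul_right,
    h11, h22, h33, h12, h21, h13, h23, h31, h32]
  refine ⟨?_, ?_, ?_⟩ <;> field_simp <;> ring
end
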